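/- For Model 1 in dimension d = 1 with i.i.d. N(0,1) weights: if B_{N/2}^N is the event that every directed path γ starting at a point of Ξ_{2^{N/2+1}}([−2^{N/2+1}, 2^{N/2+1}]) and ending at level 2^N satisfies V(γ) ≤ (μ + ε)2^N, then lim_{N→∞} P(B_{N/2}^N) = 1. -/

import Mathlib

/-!
Model 1 (directed last passage percolation, d = 1).  Edges are indexed by
`(x, m, b) : ℤ × ℕ × Bool`, representing the directed edge from the vertex
`(x, m)` to `(x + (if b then 1 else -1), m + 1)`.
-/

open MeasureTheory ProbabilityTheory Filter

namespace Stmt12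

/-- Position of a directed path after `k` steps, starting at `x`,
with step signs `s`. -/
def pos (x : ℤ) (s : ℕ → Bool) : ℕ → ℤ
  | 0 => x
  | k + 1 => pos x s k + (if s k then 1 else -1)

/-- Value `V(γ)` of the directed path starting at `(x, m)`, taking `n` steps
according to `s`, in the edge-weight realization `Y`. -/
noncomputable def pathVal (Y : ℤ × ℕ × Bool → ℝ) (x : ℤ) (m : ℕ) (s : ℕ → Bool) (n : ℕ) : ℝ :=
  ∑ k ∈ Finset.range n, Y (pos x s k, m + k, s k)

/-- Last passage time `Z_n` from the origin to level `n`. -/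
noncomputable def Z (Y : ℤ × ℕ × Bool → ℝ) (n : ℕ) : ℝ :=
  ⨆ s : ℕ → Bool, pathVal Y 0 0 s n

/-- The event `B_{N/2}^N`: every directed path `γ` starting at a point of
`Ξ_{2^{N/2+1}}([-2^{N/2+1}, 2^{N/2+1}])` and ending at level `2^N` satisfies
`V(γ) ≤ (μ + ε) 2^N`. -/
def Bevent (X : ℤ × ℕ × Bool → Ω → ℝ) (μ ε : ℝ) (N : ℕ) : Set Ω :=
  {ω | ∀ x : ℤ, |x| ≤ (2 ^ (N / 2 + 1) : ℤ) → (x + (2 ^ (N / 2 + 1) : ℤ)) % 2 = 0 →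
    ∀ s : ℕ → Bool,
      pathVal (fun e => X e ω) x (2 ^ (N / 2 + 1)) s (2 ^ N - 2 ^ (N / 2 + 1)) ≤
        (μ + ε) * 2 ^ N}

end Stmt12

open Stmt12

/-!
Let `m = 2 ^ (N / 2 + 1)`. A path from `(x, m)` with `|x| ≤ m` can be preceded by a path from
the origin to `(x, m)`, and the concatenation is a path from the origin to level `2 ^ N`. So if
`Z_{2^N} ≤ (μ + ε/2) 2^N`, a path violating `B_{N/2}^N` forces some path of length `m` from the
origin to have value at most `-ε/2 · 2^N`. The first event has probability tending to one, since
almost sure convergence implies convergence in probability. The second is a union of `2^m` events,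
each concerning a sum of `m` independent standard Gaussians, so the Chernoff bound gives
probability at most `2^m exp (m/2 - ε 2^N / 2)`, which tends to zero because `m = O(2^{N/2})`.
-/

theorem ProbabilityTheory.hasSubgaussianMGF_of_map_eq_gaussianReal {Ω : Type*}
    [MeasurableSpace Ω] {P : Measure Ω} [IsProbabilityMeasure P] {X : Ω → ℝ} {v : NNReal}
    (hX : P.map X = gaussianReal 0 v) : HasSubgaussianMGF X v P where
  integrable_exp_mul t := mgf_pos_iff.1 (by rw [mgf_gaussianReal hX]; positivity)
  mgf_le t := by rw [mgf_gaussianReal hX]; simp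

theorem ProbabilityTheory.HasSubgaussianMGF.measureReal_ge_le_exp_add {Ω : Type*}
    [MeasurableSpace Ω] {P : Measure Ω} [IsFiniteMeasure P] {X : Ω → ℝ} {c : NNReal}
    (h : HasSubgaussianMGF X c P) (ε : ℝ) {t : ℝ} (ht : 0 ≤ t) :
    P.real {ω | ε ≤ X ω} ≤ Real.exp (-t * ε + c * t ^ 2 / 2) := by
  rw [Real.exp_add]
  exact (measure_ge_le_exp_mul_mgf ε ht (h.integrable_exp_mul t)).trans
    (mul_le_mul_of_nonneg_left (h.mgf_le t) (Real.exp_pos _).le)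

theorem MeasureTheory.tendsto_prob_one_of_tendsto_compl_zero {Ω ι : Type*} [MeasurableSpace Ω]
    {P : Measure Ω} [IsProbabilityMeasure P] {l : Filter ι} {s : ι → Set Ω}
    (h : Tendsto (fun i => P (s i)ᶜ) l (nhds 0)) : Tendsto (fun i => P (s i)) l (nhds 1) := by
  have hlow : Tendsto (fun i => 1 - P (s i)ᶜ) l (nhds 1) := by
    simpa using ENNReal.Tendsto.sub tendsto_const_nhds h (Or.inl ENNReal.one_ne_top)
  refine tendsto_of_tendsto_of_tendsto_of_le_of_le hlow tendsto_const_nhds (fun i => ?_)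
    fun i => prob_le_one
  rw [tsub_le_iff_right, ← measure_univ (μ := P)]
  exact measure_univ_le_add_compl _

theorem tendsto_two_pow_half_mul_sub_atBot (K : ℝ) {a : ℝ} (ha : 0 < a) :
    Tendsto (fun N : ℕ => 2 ^ (N / 2 + 1) * K - a * 2 ^ N) atTop atBot := by
  have hpow := tendsto_pow_atTop_atTop_of_one_lt (one_lt_two (α := ℝ))
  have hfactor : Tendsto (fun N : ℕ => (2 : ℝ) ^ (N / 2 + 1)) atTop atTop :=
    hpow.comp (tendsto_atTop_atTop.2 fun b => ⟨2 * b, fun N hN => by omega⟩)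
  have hrest : Tendsto (fun N : ℕ => K - a * 2 ^ (N - (N / 2 + 1))) atTop atBot := by
    simp_rw [sub_eq_add_neg]
    refine tendsto_atBot_add_const_left _ K (tendsto_neg_atTop_atBot.comp ?_)
    exact (hpow.const_mul_atTop ha).comp
      (tendsto_atTop_atTop.2 fun b => ⟨2 * b + 2, fun N hN => by omega⟩)
  refine (hfactor.atTop_mul_atBot₀ hrest).congr' ?_
  filter_upwards [eventually_ge_atTop 1] with N hN
  rw [mul_sub, mul_left_comm, ← pow_add, Nat.add_sub_cancel' (by omega)]

namespace Stmt12

section Paths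

variable (Y : ℤ × ℕ × Bool → ℝ)

theorem pos_congr {x : ℤ} {s s' : ℕ → Bool} {k : ℕ} (h : ∀ j < k, s j = s' j) :
    pos x s k = pos x s' k := by
  induction k with
  | zero => rfl
  | succ k ih => rw [pos, pos, ih fun j hj => h j (by omega), h k k.lt_succ_self]

theorem pathVal_congr {x : ℤ} {l n : ℕ} {s s' : ℕ → Bool} (h : ∀ j < n, s j = s' j) :
    pathVal Y x l s n = pathVal Y x l s' n :=
  Finset.sum_congr rfl fun k hk => by
    rw [Finset.mem_range] at hk
    rw [pos_congr fun j hj => h j (hj.trans hk), h k hk]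

def concatSteps (m : ℕ) (t s : ℕ → Bool) : ℕ → Bool :=
  fun j => if j < m then t j else s (j - m)

theorem pos_concatSteps (x : ℤ) (m : ℕ) (t s : ℕ → Bool) (k : ℕ) :
    pos x (concatSteps m t s) (m + k) = pos (pos x t m) s k := by
  induction k with
  | zero => exact pos_congr fun j hj => if_pos hj
  | succ k ih => simp [pos, ih, concatSteps]

theorem pathVal_concatSteps (x : ℤ) (l m n : ℕ) (t s : ℕ → Bool) :
    pathVal Y x l (concatSteps m t s) (m + n) =
      pathVal Y x l t m + pathVal Y (pos x t m) (l + m) s n := by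
  rw [pathVal, Finset.sum_range_add]
  congr 1
  · exact pathVal_congr Y fun j hj => if_pos hj
  · refine Finset.sum_congr rfl fun k _ => ?_
    simp [pos_concatSteps, concatSteps, add_assoc]

theorem exists_pos_eq {m : ℕ} {x : ℤ} (hx : |x| ≤ m) (hpar : (x + m) % 2 = 0) :
    ∃ t : ℕ → Bool, pos 0 t m = x := by
  induction m generalizing x with
  | zero => exact ⟨fun _ => true, by simp_all [pos]⟩
  | succ m ih =>
    rw [abs_le] at hx
    push_cast at hx hpar
    obtain ⟨b, hb⟩ : ∃ b : Bool, |x - (if b then 1 else -1)| ≤ m ∧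
        (x - (if b then 1 else -1) + m) % 2 = 0 := by
      by_cases h : 0 < x
      · exact ⟨true, by simp only [↓reduceIte, abs_le]; omega⟩
      · exact ⟨false, by simp only [Bool.false_eq_true, ↓reduceIte, abs_le]; omega⟩
    obtain ⟨t, ht⟩ := ih hb.1 hb.2
    refine ⟨Function.update t m b, ?_⟩
    rw [pos, pos_congr fun j hj => Function.update_of_ne hj.ne b t, ht, Function.update_self]
    ring

theorem pathVal_eq_extend (x : ℤ) (l n : ℕ) (s : ℕ → Bool) :
    pathVal Y x l s n =
      pathVal Y x l (Function.extend Fin.val (fun i : Fin n => s i) fun _ => false) n :=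
  pathVal_congr Y fun j hj =>
    (Fin.val_injective.extend_apply (fun i : Fin n => s i) _ ⟨j, hj⟩).symm

theorem range_pathVal (x : ℤ) (l n : ℕ) :
    Set.range (fun s => pathVal Y x l s n) = Set.range fun t : Fin n → Bool =>
      pathVal Y x l (Function.extend Fin.val t fun _ => false) n := by
  refine subset_antisymm ?_ (Set.range_subset_iff.2 fun t => ⟨_, rfl⟩)
  rintro _ ⟨s, rfl⟩
  exact ⟨_, (pathVal_eq_extend Y x l n s).symm⟩

theorem Z_eq_iSup_fin (n : ℕ) :
    Z Y n = ⨆ t : Fin n → Bool, pathVal Y 0 0 (Function.extend Fin.val t fun _ => false) n := by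
  rw [Z, iSup, range_pathVal, ← iSup]

theorem pathVal_le_Z (s : ℕ → Bool) (n : ℕ) : pathVal Y 0 0 s n ≤ Z Y n := by
  refine le_csSup ?_ (Set.mem_range_self s)
  rw [range_pathVal]
  exact (Set.finite_range _).bddAbove

theorem exists_pathVal_add_le_Z {m n : ℕ} (hmn : m ≤ n) {x : ℤ} (hx : |x| ≤ m)
    (hpar : (x + m) % 2 = 0) (s : ℕ → Bool) :
    ∃ t : ℕ → Bool, pathVal Y 0 0 t m + pathVal Y x m s (n - m) ≤ Z Y n := by
  obtain ⟨t, rfl⟩ := exists_pos_eq hx hpar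
  refine ⟨t, ?_⟩
  have h := pathVal_le_Z Y (concatSteps m t s) (m + (n - m))
  rwa [pathVal_concatSteps, zero_add, Nat.add_sub_cancel' hmn] at h

end Paths

section Probability

open Real

variable {Ω : Type} [MeasurableSpace Ω] {P : Measure Ω} {X : ℤ × ℕ × Bool → Ω → ℝ}

theorem aemeasurable_Z (hX : ∀ e, AEMeasurable (X e) P) (n : ℕ) :
    AEMeasurable (fun ω => Z (fun e => X e ω) n) P := by
  simp_rw [Z_eq_iSup_fin]
  exact AEMeasurable.iSup fun t => Finset.aemeasurable_fun_sum _ fun k _ => hX _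

variable [IsProbabilityMeasure P]

theorem measure_pathVal_le_neg (hindep : iIndepFun X P)
    (hdist : ∀ e, P.map (X e) = gaussianReal 0 1) (x : ℤ) (l : ℕ) (s : ℕ → Bool) (n : ℕ)
    (c : ℝ) :
    P {ω | pathVal (fun e => X e ω) x l s n ≤ -c} ≤ ENNReal.ofReal (exp (n / 2 - c)) := by
  -- the edges of a path lie on distinct levels, so their weights are independent
  have hinj : Function.Injective fun k => (pos x s k, l + k, s k) := fun a b h => by
    simpa using congrArg (fun e : ℤ × ℕ × Bool => e.2.1) h
  have hsum := (HasSubgaussianMGF.sum_of_iIndepFun (hindep.precomp hinj)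
    (s := Finset.range n) fun k _ => hasSubgaussianMGF_of_map_eq_gaussianReal (hdist _)).neg
  have hbound := hsum.measureReal_ge_le_exp_add c zero_le_one
  rw [← ofReal_measureReal]
  refine ENNReal.ofReal_le_ofReal ?_
  calc P.real {ω | pathVal (fun e => X e ω) x l s n ≤ -c}
      = P.real {ω | c ≤ (-fun ω => ∑ k ∈ Finset.range n, X (pos x s k, l + k, s k) ω) ω} := by
        simp [pathVal, le_neg]
    _ ≤ _ := hbound
    _ = exp (n / 2 - c) := by
        rw [Finset.sum_const, Finset.card_range, nsmul_one, NNReal.coe_natCast]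
        ring_nf

theorem measure_exists_pathVal_le_neg (hindep : iIndepFun X P)
    (hdist : ∀ e, P.map (X e) = gaussianReal 0 1) (x : ℤ) (l n : ℕ) (c : ℝ) :
    P {ω | ∃ s, pathVal (fun e => X e ω) x l s n ≤ -c} ≤
      ENNReal.ofReal (exp (n * (log 2 + 1 / 2) - c)) := by
  have hsub : {ω | ∃ s, pathVal (fun e => X e ω) x l s n ≤ -c} ⊆ ⋃ t : Fin n → Bool,
      {ω | pathVal (fun e => X e ω) x l (Function.extend Fin.val t fun _ => false) n ≤ -c} :=
    fun ω ⟨s, hs⟩ =>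
      Set.mem_iUnion.2 ⟨fun i => s i, by rwa [Set.mem_ofPred_eq, ← pathVal_eq_extend]⟩
  refine ((measure_mono hsub).trans (measure_iUnion_fintype_le P _)).trans ?_
  refine (Finset.sum_le_sum fun t _ => measure_pathVal_le_neg hindep hdist x l _ n c).trans ?_
  rw [Finset.sum_const, Finset.card_univ, Fintype.card_fun, Fintype.card_bool, Fintype.card_fin,
    nsmul_eq_mul, ← ENNReal.ofReal_natCast, ← ENNReal.ofReal_mul (by positivity)]
  refine ENNReal.ofReal_le_ofReal (le_of_eq ?_)
  rw [mul_add, add_sub_assoc, exp_add, mul_comm (n : ℝ), ← rpow_def_of_pos two_pos,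
    rpow_natCast]
  push_cast
  ring_nf

theorem tendsto_measure_lt_Z (hX : ∀ e, AEMeasurable (X e) P) {μ : ℝ}
    (hμ : ∀ᵐ ω ∂P, Tendsto (fun n : ℕ => Z (fun e => X e ω) n / n) atTop (nhds μ))
    {δ : ℝ} (hδ : 0 < δ) {n : ℕ → ℕ} (hn : Tendsto n atTop atTop) :
    Tendsto (fun N => P {ω | (μ + δ) * n N < Z (fun e => X e ω) (n N)}) atTop (nhds 0) := by
  have hconv : TendstoInMeasure P (fun N ω => Z (fun e => X e ω) (n N) / n N) atTop
      fun _ => μ :=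
    tendstoInMeasure_of_tendsto_ae
      (fun N => ((aemeasurable_Z hX _).div_const _).aestronglyMeasurable)
      (hμ.mono fun ω h => h.comp hn)
  refine tendsto_of_tendsto_of_tendsto_of_le_of_le' tendsto_const_nhds
    (hconv (ENNReal.ofReal δ) (by simpa using hδ)) (.of_forall fun _ => zero_le) ?_
  filter_upwards [hn.eventually_gt_atTop 0] with N hN
  refine measure_mono fun ω hω => ?_
  have hlt : μ + δ < Z (fun e => X e ω) (n N) / n N :=
    (lt_div_iff₀ (by exact_mod_cast hN)).2 hω
  simp only [edist_dist, Real.dist_eq]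
  exact ENNReal.ofReal_le_ofReal ((by linarith : δ ≤ _ - μ).trans (le_abs_self _))

end Probability

theorem compl_Bevent_subset {Ω : Type} (X : ℤ × ℕ × Bool → Ω → ℝ) (μ ε : ℝ) {N : ℕ}
    (hN : 1 ≤ N) :
    (Bevent X μ ε N)ᶜ ⊆ {ω | (μ + ε / 2) * 2 ^ N < Z (fun e => X e ω) (2 ^ N)} ∪
      {ω | ∃ s, pathVal (fun e => X e ω) 0 0 s (2 ^ (N / 2 + 1)) ≤ -(ε / 2 * 2 ^ N)} := by
  intro ω hω
  simp only [Bevent, Set.mem_compl_iff, Set.mem_ofPred_eq, not_forall, not_le] at hω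
  obtain ⟨x, hx, hpar, s, hs⟩ := hω
  obtain ⟨t, ht⟩ := exists_pathVal_add_le_Z (fun e => X e ω)
    (Nat.pow_le_pow_right two_pos (by omega) : 2 ^ (N / 2 + 1) ≤ 2 ^ N)
    (x := x) (by exact_mod_cast hx) (by exact_mod_cast hpar) s
  by_contra hcon
  simp only [Set.mem_union, Set.mem_ofPred_eq, not_or, not_lt, not_exists, not_le] at hcon
  have := hcon.2 t
  linarith

end Stmt12

theorem stmt_12_general
    {Ω : Type} [MeasurableSpace Ω] (P : Measure Ω) [IsProbabilityMeasure P]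
    (X : ℤ × ℕ × Bool → Ω → ℝ)
    (hindep : iIndepFun X P)
    (hdist : ∀ e, Measure.map (X e) P = gaussianReal 0 1)
    (μ : ℝ)
    (hμ : ∀ᵐ ω ∂P, Tendsto (fun n : ℕ => Z (fun e => X e ω) n / n) atTop (nhds μ))
    (ε : ℝ) (hε : 0 < ε) :
    Tendsto (fun N : ℕ => P (Bevent X μ ε N)) atTop (nhds 1) := by
  have hX : ∀ e, AEMeasurable (X e) P :=
    fun e => aemeasurable_of_map_neZero (by rw [hdist e]; infer_instance)
  have hZ := tendsto_measure_lt_Z hX hμ (half_pos hε)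
    (tendsto_pow_atTop_atTop_of_one_lt (one_lt_two (α := ℕ)))
  have hprefix : Tendsto (fun N : ℕ => P {ω | ∃ s, pathVal (fun e => X e ω) 0 0 s
      (2 ^ (N / 2 + 1)) ≤ -(ε / 2 * 2 ^ N)}) atTop (nhds 0) := by
    have hrate := ENNReal.tendsto_ofReal (Real.tendsto_exp_atBot.comp
      (tendsto_two_pow_half_mul_sub_atBot (Real.log 2 + 1 / 2) (half_pos hε)))
    rw [ENNReal.ofReal_zero] at hrate
    refine tendsto_of_tendsto_of_tendsto_of_le_of_le tendsto_const_nhds hrate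
      (fun _ => zero_le) fun N => ?_
    simpa using
      measure_exists_pathVal_le_neg hindep hdist 0 0 (2 ^ (N / 2 + 1)) (ε / 2 * 2 ^ N)
  refine tendsto_prob_one_of_tendsto_compl_zero (tendsto_of_tendsto_of_tendsto_of_le_of_le'
    tendsto_const_nhds (by simpa using hZ.add hprefix) (.of_forall fun _ => zero_le) ?_)
  filter_upwards [eventually_ge_atTop 1] with N hN
  exact (measure_mono (compl_Bevent_subset X μ ε hN)).trans (measure_union_le _ _)

/-- Lemma 3.2.  For Model 1 in dimension `d = 1` with i.i.d.
`N(0,1)` weights, `P(B_{N/2}^N) → 1` as `N → ∞`. -/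
theorem stmt_12
    {Ω : Type} [MeasurableSpace Ω] (P : Measure Ω) [IsProbabilityMeasure P]
    (X : ℤ × ℕ × Bool → Ω → ℝ)
    (hmeas : ∀ e, Measurable (X e))
    (hindep : iIndepFun X P)
    (hdist : ∀ e, Measure.map (X e) P = gaussianReal 0 1)
    (μ : ℝ)
    (hμ : ∀ᵐ ω ∂P, Tendsto (fun n : ℕ => Z (fun e => X e ω) n / n) atTop (nhds μ))
    (ε : ℝ) (hε : 0 < ε) :
    Tendsto (fun N : ℕ => P (Bevent X μ ε N)) atTop (nhds 1) :=
  stmt_12_general P X hindep hdist μ hμ ε hε
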